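/- For any four jointly distributed finite discrete random variables X₀, X₁, Y₀, Y₁, the Braunstein–Caves entropic Bell inequality holds: H(Y₁|X₁) + H(X₁|Y₀) + H(X₀|Y₁) - H(X₀|Y₀) ≥ 0. -/

import Mathlib

open Finset

/-- Probability that the random variable `X` takes value `x`, for weights `μ`. -/
noncomputable def prob {Ω α : Type} [Fintype Ω] [Fintype α] [DecidableEq α]
    (μ : Ω → ℝ) (X : Ω → α) (x : α) : ℝ :=
  ∑ ω, if X ω = x then μ ω else 0

/-- Shannon entropy (base 2) of a finite discrete random variable,
with the convention `0 * log₂ 0 = 0` (since `Real.logb 2 0 = 0`). -/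
noncomputable def ent {Ω α : Type} [Fintype Ω] [Fintype α] [DecidableEq α]
    (μ : Ω → ℝ) (X : Ω → α) : ℝ :=
  -∑ x, prob μ X x * Real.logb 2 (prob μ X x)

/-- `μ` is a probability mass function on the finite sample space `Ω`. -/
def IsPMF {Ω : Type} [Fintype Ω] (μ : Ω → ℝ) : Prop :=
  (∀ ω, 0 ≤ μ ω) ∧ ∑ ω, μ ω = 1

/-- Mutual information `I(X:Y) = H(X) + H(Y) - H(X,Y)`. -/
noncomputable def mutualInfo {Ω α β : Type} [Fintype Ω] [Fintype α] [Fintype β]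
    [DecidableEq α] [DecidableEq β] (μ : Ω → ℝ) (X : Ω → α) (Y : Ω → β) : ℝ :=
  ent μ X + ent μ Y - ent μ (fun ω => (X ω, Y ω))

/-- Conditional mutual information
`I(X:Y|Z) = H(X,Z) + H(Y,Z) - H(Z) - H(X,Y,Z)`. -/
noncomputable def condMutualInfo {Ω α β γ : Type} [Fintype Ω] [Fintype α] [Fintype β]
    [Fintype γ] [DecidableEq α] [DecidableEq β] [DecidableEq γ]
    (μ : Ω → ℝ) (X : Ω → α) (Y : Ω → β) (Z : Ω → γ) : ℝ :=
  ent μ (fun ω => (X ω, Z ω)) + ent μ (fun ω => (Y ω, Z ω)) - ent μ Z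
    - ent μ (fun ω => (X ω, Y ω, Z ω))

/-- Conditional entropy `H(X|Y) = H(X,Y) - H(Y)`. -/
noncomputable def condEnt {Ω α β : Type} [Fintype Ω] [Fintype α] [Fintype β]
    [DecidableEq α] [DecidableEq β] (μ : Ω → ℝ) (X : Ω → α) (Y : Ω → β) : ℝ :=
  ent μ (fun ω => (X ω, Y ω)) - ent μ Y

/-!
Conditional entropy satisfies the triangle inequality `H(A|C) ≤ H(A|B) + H(B|C)`: it is the sum of
monotonicity `H(A,C) ≤ H(A,B,C)` and submodularity `H(A,B,C) + H(B) ≤ H(A,B) + H(B,C)`. Applying it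
along the chain `X₀ – Y₁ – X₁ – Y₀` gives
`H(X₀|Y₀) ≤ H(X₀|Y₁) + H(Y₁|Y₀) ≤ H(X₀|Y₁) + H(Y₁|X₁) + H(X₁|Y₀)`.
Submodularity is `I(X:Y|Z) ≥ 0`, and `I(X:Y|Z)` is the relative entropy of the law of `(X,Y,Z)`
with respect to the mass function `p(x,z) p(y,z) / p(z)`; as both have the same total mass, it is
nonnegative by `log t ≤ t - 1`.
-/

open Finset Real

variable {Ω α β γ : Type} [Fintype Ω] [Fintype α] [Fintype β] [Fintype γ]
  [DecidableEq α] [DecidableEq β] [DecidableEq γ] {μ : Ω → ℝ}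

lemma prob_nonneg (hμ : ∀ ω, 0 ≤ μ ω) (X : Ω → α) (x : α) : 0 ≤ prob μ X x :=
  sum_nonneg fun ω _ => by split_ifs <;> simp [hμ ω]

lemma le_prob_apply (hμ : ∀ ω, 0 ≤ μ ω) (X : Ω → α) (ω₀ : Ω) : μ ω₀ ≤ prob μ X (X ω₀) := by
  simpa [prob] using single_le_sum (f := fun ω => if X ω = X ω₀ then μ ω else 0)
    (fun ω _ => by split_ifs <;> simp [hμ ω]) (mem_univ ω₀)

lemma prob_apply_pos (hμ : ∀ ω, 0 ≤ μ ω) (X : Ω → α) {ω : Ω} (hω : 0 < μ ω) :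
    0 < prob μ X (X ω) :=
  hω.trans_le (le_prob_apply hμ X ω)

lemma prob_le_prob_comp (hμ : ∀ ω, 0 ≤ μ ω) (X : Ω → α) (f : α → β) (x : α) :
    prob μ X x ≤ prob μ (fun ω => f (X ω)) (f x) :=
  sum_le_sum fun ω _ => by
    by_cases h : X ω = x
    · simp [h]
    · simp only [if_neg h]; split_ifs <;> simp [hμ ω]

lemma prob_comp_of_injective (X : Ω → α) {f : α → β} (hf : Function.Injective f) (x : α) :
    prob μ (fun ω => f (X ω)) (f x) = prob μ X x := by
  simp only [prob, hf.eq_iff]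

lemma sum_prob_mul (μ : Ω → ℝ) (X : Ω → α) (φ : α → ℝ) :
    ∑ x, prob μ X x * φ x = ∑ ω, μ ω * φ (X ω) := by
  simp only [prob, sum_mul, ite_mul, zero_mul]
  rw [sum_comm]
  simp

lemma sum_prob (μ : Ω → ℝ) (X : Ω → α) : ∑ x, prob μ X x = ∑ ω, μ ω := by
  simpa using sum_prob_mul μ X fun _ => 1

lemma sum_prob_pair_left (μ : Ω → ℝ) (X : Ω → α) (Z : Ω → γ) (z : γ) :
    ∑ x, prob μ (fun ω => (X ω, Z ω)) (x, z) = prob μ Z z := by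
  simp only [prob]
  rw [sum_comm]
  refine sum_congr rfl fun ω _ => ?_
  by_cases h : Z ω = z <;> simp [Prod.ext_iff, h]

lemma sum_mul_div_prob_le (hμ : ∀ ω, 0 ≤ μ ω) (X : Ω → α) {F : α → ℝ} (hF : ∀ x, 0 ≤ F x) :
    ∑ ω, μ ω * (F (X ω) / prob μ X (X ω)) ≤ ∑ x, F x := by
  rw [← sum_prob_mul μ X fun x => F x / prob μ X x]
  refine sum_le_sum fun x _ => ?_
  rcases (prob_nonneg hμ X x).eq_or_lt with h0 | hpos
  · simp [← h0, hF x]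
  · rw [mul_div_cancel₀ _ hpos.ne']

lemma ent_eq_sum (μ : Ω → ℝ) (X : Ω → α) :
    ent μ X = -∑ ω, μ ω * logb 2 (prob μ X (X ω)) := by
  rw [ent, sum_prob_mul]

lemma ent_comp_of_injective (X : Ω → α) {f : α → β} (hf : Function.Injective f) :
    ent μ (fun ω => f (X ω)) = ent μ X := by
  simp only [ent_eq_sum, prob_comp_of_injective X hf]

lemma ent_comp_le (hμ : ∀ ω, 0 ≤ μ ω) (X : Ω → α) (f : α → β) :
    ent μ (fun ω => f (X ω)) ≤ ent μ X := by
  rw [ent_eq_sum, ent_eq_sum, neg_le_neg_iff]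
  refine sum_le_sum fun ω _ => ?_
  rcases (hμ ω).eq_or_lt with h0 | hpos
  · simp [← h0]
  · exact mul_le_mul_of_nonneg_left (logb_le_logb_of_le one_lt_two (prob_apply_pos hμ X hpos)
      (prob_le_prob_comp hμ X f _)) hpos.le

lemma sum_mul_logb_nonpos (hμ : ∀ ω, 0 ≤ μ ω) {q : Ω → ℝ} (hq : ∀ ω, 0 < μ ω → 0 < q ω)
    (h : ∑ ω, μ ω * q ω ≤ ∑ ω, μ ω) : ∑ ω, μ ω * logb 2 (q ω) ≤ 0 := by
  have hlog : ∑ ω, μ ω * log (q ω) ≤ ∑ ω, μ ω * (q ω - 1) := by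
    refine sum_le_sum fun ω _ => ?_
    rcases (hμ ω).eq_or_lt with h0 | hpos
    · simp [← h0]
    · exact mul_le_mul_of_nonneg_left (log_le_sub_one_of_pos (hq ω hpos)) hpos.le
  simp only [mul_sub, mul_one, sum_sub_distrib] at hlog
  simp only [logb, mul_div_assoc', ← sum_div]
  exact div_nonpos_of_nonpos_of_nonneg (by linarith) (log_nonneg one_le_two)

noncomputable def condIndepMass (μ : Ω → ℝ) (X : Ω → α) (Y : Ω → β) (Z : Ω → γ)
    (t : α × β × γ) : ℝ :=
  prob μ (fun ω => (X ω, Z ω)) (t.1, t.2.2) * prob μ (fun ω => (Y ω, Z ω)) (t.2.1, t.2.2) /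
    prob μ Z t.2.2

lemma condIndepMass_nonneg (hμ : ∀ ω, 0 ≤ μ ω) (X : Ω → α) (Y : Ω → β) (Z : Ω → γ)
    (t : α × β × γ) : 0 ≤ condIndepMass μ X Y Z t :=
  div_nonneg (mul_nonneg (prob_nonneg hμ _ _) (prob_nonneg hμ _ _)) (prob_nonneg hμ _ _)

lemma sum_condIndepMass (μ : Ω → ℝ) (X : Ω → α) (Y : Ω → β) (Z : Ω → γ) :
    ∑ t, condIndepMass μ X Y Z t = ∑ ω, μ ω := by
  calc ∑ t, condIndepMass μ X Y Z t
      = ∑ z, (∑ x, prob μ (fun ω => (X ω, Z ω)) (x, z)) *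
          (∑ y, prob μ (fun ω => (Y ω, Z ω)) (y, z)) / prob μ Z z := by
        simp only [condIndepMass, Fintype.sum_prod_type, sum_mul, sum_div]
        simp only [mul_sum, sum_div]
        exact sum_comm_cycle
    _ = ∑ z, prob μ Z z := by simp only [sum_prob_pair_left, mul_self_div_self]
    _ = ∑ ω, μ ω := sum_prob μ Z

lemma condMutualInfo_eq_neg_sum (hμ : ∀ ω, 0 ≤ μ ω) (X : Ω → α) (Y : Ω → β) (Z : Ω → γ) :
    condMutualInfo μ X Y Z = -∑ ω, μ ω * logb 2 (condIndepMass μ X Y Z (X ω, Y ω, Z ω) /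
      prob μ (fun ω => (X ω, Y ω, Z ω)) (X ω, Y ω, Z ω)) := by
  simp only [condMutualInfo, ent_eq_sum, condIndepMass, ← sum_neg_distrib,
    ← sum_add_distrib, ← sum_sub_distrib]
  refine sum_congr rfl fun ω _ => ?_
  rcases (hμ ω).eq_or_lt with h0 | hpos
  · simp [← h0]
  · have hXZ := prob_apply_pos hμ (fun ω => (X ω, Z ω)) hpos
    have hYZ := prob_apply_pos hμ (fun ω => (Y ω, Z ω)) hpos
    have hZ := prob_apply_pos hμ Z hpos
    have hXYZ := prob_apply_pos hμ (fun ω => (X ω, Y ω, Z ω)) hpos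
    rw [logb_div (by positivity) hXYZ.ne', logb_div (by positivity) hZ.ne',
      logb_mul hXZ.ne' hYZ.ne']
    ring

theorem condMutualInfo_nonneg (hμ : ∀ ω, 0 ≤ μ ω) (X : Ω → α) (Y : Ω → β) (Z : Ω → γ) :
    0 ≤ condMutualInfo μ X Y Z := by
  rw [condMutualInfo_eq_neg_sum hμ, neg_nonneg]
  refine sum_mul_logb_nonpos hμ (fun ω hω => div_pos ?_ (prob_apply_pos hμ _ hω)) ?_
  · exact div_pos (mul_pos (prob_apply_pos hμ _ hω) (prob_apply_pos hμ _ hω))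
      (prob_apply_pos hμ Z hω)
  · exact (sum_mul_div_prob_le hμ _ (condIndepMass_nonneg hμ X Y Z)).trans
      (sum_condIndepMass μ X Y Z).le

theorem condEnt_le_condEnt_add_condEnt (hμ : ∀ ω, 0 ≤ μ ω) (A : Ω → α) (B : Ω → β)
    (C : Ω → γ) : condEnt μ A C ≤ condEnt μ A B + condEnt μ B C := by
  have hmono : ent μ (fun ω => (A ω, C ω)) ≤ ent μ (fun ω => (A ω, C ω, B ω)) :=
    ent_comp_le hμ (fun ω => (A ω, C ω, B ω)) fun t => (t.1, t.2.1)
  have hsubmod := condMutualInfo_nonneg hμ A C B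
  have hswap : ent μ (fun ω => (C ω, B ω)) = ent μ (fun ω => (B ω, C ω)) :=
    ent_comp_of_injective (fun ω => (B ω, C ω)) Prod.swap_injective
  rw [condMutualInfo] at hsubmod
  rw [condEnt, condEnt, condEnt]
  linarith

/-- Braunstein–Caves entropic Bell inequality:
H(Y₁|X₁) + H(X₁|Y₀) + H(X₀|Y₁) - H(X₀|Y₀) ≥ 0. -/
theorem braunstein_caves
    {Ω α β : Type} [Fintype Ω] [Fintype α] [Fintype β] [DecidableEq α] [DecidableEq β]
    (μ : Ω → ℝ) (hμ : IsPMF μ)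
    (X0 X1 : Ω → α) (Y0 Y1 : Ω → β) :
    0 ≤ condEnt μ Y1 X1 + condEnt μ X1 Y0 + condEnt μ X0 Y1 - condEnt μ X0 Y0 := by
  have hX0 := condEnt_le_condEnt_add_condEnt hμ.1 X0 Y1 Y0
  have hY1 := condEnt_le_condEnt_add_condEnt hμ.1 Y1 X1 Y0
  linarith
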